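/- For every integer m ≥ 3 there exist constants A > 0 and B > 0 such that, setting p = (m+2)/(m−2) and f(w) = (1+w)^p − 1 − p·w (where the power is the real power of the positive number 1+w), for all real numbers u and v with |u| ≤ 1/2 and |v| ≤ 1/2 one has |f(u) − f(v)| ≤ ( A(|u| + |v|) + B(|u|^{4/(m−2)} + |v|^{4/(m−2)}) ) · |u − v|. -/

import Mathlib

open Real Set

lemma aux_rpow_lip (q : ℝ) (hq : 0 < q) {a b : ℝ}
    (ha : a ∈ Icc (1/2 : ℝ) (3/2)) (hb : b ∈ Icc (1/2 : ℝ) (3/2)) :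
    |a ^ q - b ^ q| ≤ q * (2 ^ q + 2) * |a - b| := by
  have key := (convex_Icc (1/2 : ℝ) (3/2)).norm_image_sub_le_of_norm_hasDerivWithin_le
    (f := fun y : ℝ => y ^ q) (f' := fun y : ℝ => q * y ^ (q - 1))
    (C := q * (2 ^ q + 2)) ?_ ?_ hb ha
  · simpa [Real.norm_eq_abs] using key
  · intro x hx
    have hx0 : x ≠ 0 := by have := hx.1; intro h; rw [h] at this; linarith
    exact (Real.hasDerivAt_rpow_const (Or.inl hx0)).hasDerivWithinAt
  · intro x hx
    have hx0 : (0:ℝ) < x := by linarith [hx.1]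
    have hbound : x ^ (q - 1) ≤ 2 ^ q + 2 := by
      rcases le_or_gt 1 q with h1 | h1
      · have h2 : x ^ (q - 1) ≤ (2:ℝ) ^ (q - 1) :=
          Real.rpow_le_rpow (le_of_lt hx0) (by linarith [hx.2]) (by linarith)
        have h3 : (2:ℝ) ^ (q - 1) ≤ 2 ^ q :=
          Real.rpow_le_rpow_of_exponent_le one_le_two (by linarith)
        have h4 : (0:ℝ) ≤ 2 := by norm_num
        linarith
      · have h2 : x ^ (q - 1) ≤ ((1:ℝ)/2) ^ (q - 1) := by
          apply Real.rpow_le_rpow_of_nonpos (by norm_num) hx.1 (by linarith)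
        have h3 : ((1:ℝ)/2) ^ (q - 1) = (2:ℝ) ^ (1 - q) := by
          rw [show ((1:ℝ)/2) = (2:ℝ) ^ (-1 : ℝ) by norm_num [Real.rpow_neg_one],
              ← Real.rpow_mul (by norm_num : (0:ℝ) ≤ 2),
              show (-1 : ℝ) * (q - 1) = 1 - q by ring]
        have h4 : (2:ℝ) ^ (1 - q) ≤ (2:ℝ) ^ (1:ℝ) :=
          Real.rpow_le_rpow_of_exponent_le one_le_two (by linarith)
        have h5 : (2:ℝ) ^ (1:ℝ) = 2 := Real.rpow_one 2
        have h6 : (0:ℝ) ≤ (2:ℝ) ^ q := Real.rpow_nonneg (by norm_num) q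
        linarith
    have hnn : 0 ≤ q * x ^ (q - 1) :=
      mul_nonneg hq.le (Real.rpow_nonneg hx0.le _)
    rw [Real.norm_eq_abs, abs_of_nonneg hnn]
    exact mul_le_mul_of_nonneg_left hbound hq.le

lemma aux_pow_near_one (q : ℝ) (hq : 0 < q) {w : ℝ} (hw : |w| ≤ 1/2) :
    |(1 + w) ^ q - 1| ≤ q * (2 ^ q + 2) * |w| := by
  obtain ⟨hw1, hw2⟩ := abs_le.1 hw
  have := aux_rpow_lip q hq (a := 1 + w) (b := 1)
    ⟨by linarith, by linarith⟩ ⟨by norm_num, by norm_num⟩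
  simpa [Real.one_rpow] using this

/-- Lipschitz-type estimate for the quadratic remainder of the Yamabe
nonlinearity `f(w) = (1+w)^{(m+2)/(m-2)} - 1 - ((m+2)/(m-2)) w`. -/
theorem stmt_2 (m : ℕ) (hm : 3 ≤ m) :
    ∃ A > (0 : ℝ), ∃ B > (0 : ℝ), ∀ u v : ℝ, |u| ≤ 1/2 → |v| ≤ 1/2 →
      |((1 + u) ^ (((m : ℝ) + 2) / ((m : ℝ) - 2)) - 1 - (((m : ℝ) + 2) / ((m : ℝ) - 2)) * u)
        - ((1 + v) ^ (((m : ℝ) + 2) / ((m : ℝ) - 2)) - 1 - (((m : ℝ) + 2) / ((m : ℝ) - 2)) * v)|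
      ≤ (A * (|u| + |v|) + B * (|u| ^ ((4 : ℝ) / ((m : ℝ) - 2)) + |v| ^ ((4 : ℝ) / ((m : ℝ) - 2))))
          * |u - v| := by
  have hm3 : (3:ℝ) ≤ (m:ℝ) := by exact_mod_cast hm
  have hm2 : (1:ℝ) ≤ (m:ℝ) - 2 := by linarith
  set q : ℝ := (4:ℝ) / ((m:ℝ) - 2) with hqdef
  have hq : 0 < q := by
    apply div_pos (by norm_num) (by linarith)
  have hp : ((m:ℝ) + 2) / ((m:ℝ) - 2) = 1 + q := by
    rw [hqdef]; field_simp; ring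
  refine ⟨(1 + q) * (q * (2 ^ q + 2)), by positivity, 1, one_pos, ?_⟩
  intro u v hu hv
  rw [hp]
  set C : ℝ := (1 + q) * (q * (2 ^ q + 2)) * (|u| + |v|) + 1 * (|u| ^ q + |v| ^ q) with hCdef
  have key := (convex_Icc (u ⊓ v) (u ⊔ v)).norm_image_sub_le_of_norm_hasDerivWithin_le
    (f := fun y : ℝ => (1 + y) ^ ((1:ℝ) + q) - 1 - (1 + q) * y)
    (f' := fun y : ℝ => (1 + q) * (1 + y) ^ q - (1 + q))
    (C := C) ?_ ?_ ?_ ?_ (x := v) (y := u)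
  · simpa [Real.norm_eq_abs] using key
  · intro x hx
    have hxu : |x| ≤ 1/2 := by
      obtain ⟨hu1, hu2⟩ := abs_le.1 hu
      obtain ⟨hv1, hv2⟩ := abs_le.1 hv
      refine abs_le.2 ⟨le_trans (le_inf hu1 hv1) hx.1, le_trans hx.2 (sup_le hu2 hv2)⟩
    have h0 : (0:ℝ) < 1 + x := by
      obtain ⟨h1, h2⟩ := abs_le.1 hxu; linarith
    have hd : HasDerivAt (fun y : ℝ => (1 + y) ^ ((1:ℝ) + q) - 1 - (1 + q) * y)
        ((1 + q) * (1 + x) ^ q - (1 + q)) x := by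
      have h1 : HasDerivAt (fun y : ℝ => 1 + y) 1 x := (hasDerivAt_id x).const_add 1
      have h2 := (Real.hasDerivAt_rpow_const (p := (1:ℝ) + q) (Or.inl h0.ne')).comp x h1
      have h3 := (h2.sub_const 1).sub ((hasDerivAt_id x).const_mul (1 + q))
      convert h3 using 1
      case e'_4 => rfl
      case e'_5 => rfl
      case e'_8 => rfl
      rw [show (1:ℝ) + q - 1 = q by ring]; ring
    exact hd.hasDerivWithinAt
  · intro x hx
    obtain ⟨hu1, hu2⟩ := abs_le.1 hu
    obtain ⟨hv1, hv2⟩ := abs_le.1 hv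
    have hxu : |x| ≤ 1/2 :=
      abs_le.2 ⟨le_trans (le_inf hu1 hv1) hx.1, le_trans hx.2 (sup_le hu2 hv2)⟩
    have hxuv : |x| ≤ |u| + |v| := by
      refine abs_le.2 ⟨?_, ?_⟩
      · refine le_trans (le_inf ?_ ?_) hx.1
        · linarith [neg_abs_le u, abs_nonneg v]
        · linarith [neg_abs_le v, abs_nonneg u]
      · refine le_trans hx.2 (sup_le ?_ ?_)
        · linarith [le_abs_self u, abs_nonneg v]
        · linarith [le_abs_self v, abs_nonneg u]
    have hest : |(1 + x) ^ q - 1| ≤ q * (2 ^ q + 2) * |x| := aux_pow_near_one q hq hxu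
    have hfact : (1 + q) * (1 + x) ^ q - (1 + q) = (1 + q) * ((1 + x) ^ q - 1) := by ring
    show ‖(1 + q) * (1 + x) ^ q - (1 + q)‖ ≤ C
    rw [Real.norm_eq_abs, hfact, abs_mul, abs_of_pos (by linarith : (0:ℝ) < 1 + q)]
    have h1 : (1 + q) * |(1 + x) ^ q - 1| ≤ (1 + q) * (q * (2 ^ q + 2) * |x|) :=
      mul_le_mul_of_nonneg_left hest (by linarith)
    have h2 : (1 + q) * (q * (2 ^ q + 2) * |x|) ≤ (1 + q) * (q * (2 ^ q + 2)) * (|u| + |v|) := by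
      have := mul_le_mul_of_nonneg_left hxuv
        (by positivity : (0:ℝ) ≤ (1 + q) * (q * (2 ^ q + 2)))
      nlinarith
    have h3 : (0:ℝ) ≤ 1 * (|u| ^ q + |v| ^ q) := by positivity
    rw [hCdef]; linarith
  · exact ⟨inf_le_right, le_sup_right⟩
  · exact ⟨inf_le_left, le_sup_left⟩
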